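/- For each j ∈ [n], the interval [δ̲_j, δ̄_j], with δ̲_j = max_{k} (δ̂_k − γ_{kk} − dist(k,j)) and δ̄_j = min_{k} (δ̂_k + γ_{kk} + dist(k,j)), equals the projection of the smooth uncertainty set U_S onto the j-th coordinate, assuming U_S is nonempty. -/
import Mathlib


/-- Total weight of a walk given as a list of vertices. -/
def chainCost {n : ℕ} (γ : Fin n → Fin n → ℝ) : List (Fin n) → ℝ
  | [] => 0
  | [_] => 0
  | a :: b :: l => γ a b + chainCost γ (b :: l)

/-- A list of vertices is a walk if consecutive vertices are adjacent. -/
def IsWalk {n : ℕ} (E : Fin n → Fin n → Prop) : List (Fin n) → Prop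
  | [] => True
  | [_] => True
  | a :: b :: l => E a b ∧ IsWalk E (b :: l)

/-- `dist` is the shortest-path distance of the weighted graph `(E, γ)`:
for each pair `(i, j)`, `dist i j` is the minimum of the costs of walks from `i` to `j`
(in particular such a walk exists, i.e. the graph is connected). -/
def IsSPDist {n : ℕ} (E : Fin n → Fin n → Prop) (γ : Fin n → Fin n → ℝ)
    (dist : Fin n → Fin n → ℝ) : Prop :=
  ∀ i j : Fin n, IsLeast {c : ℝ | ∃ l : List (Fin n), IsWalk E l ∧
    l.head? = some i ∧ l.getLast? = some j ∧ c = chainCost γ l} (dist i j)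

/-- The smooth uncertainty set `U_S(δ̂, G)`. -/
def smoothSet {n : ℕ} (δhat : Fin n → ℝ) (E : Fin n → Fin n → Prop)
    (γ : Fin n → Fin n → ℝ) : Set (Fin n → ℝ) :=
  {δ | (∀ i, |δ i - δhat i| ≤ γ i i) ∧ ∀ i j, E i j → |δ i - δ j| ≤ γ i j}

namespace Stmt7Aux

variable {n : ℕ} {E : Fin n → Fin n → Prop} {γ : Fin n → Fin n → ℝ}

lemma chainCost_nonneg (hγ : ∀ i j, 0 ≤ γ i j) : ∀ l : List (Fin n), 0 ≤ chainCost γ l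
  | [] => le_refl 0
  | [_] => le_refl 0
  | a :: b :: l => by
      simp only [chainCost]
      exact add_nonneg (hγ a b) (chainCost_nonneg hγ (b :: l))

lemma walk_append : ∀ (l1 : List (Fin n)) (a : Fin n) (l2 : List (Fin n)),
    l1.getLast? = some a → IsWalk E l1 → IsWalk E (a :: l2) →
    IsWalk E (l1 ++ l2) ∧ chainCost γ (l1 ++ l2) = chainCost γ l1 + chainCost γ (a :: l2)
      ∧ (l1 ++ l2).head? = l1.head? ∧ (l1 ++ l2).getLast? = (a :: l2).getLast?
  | [], a, l2 => by intro h; simp at h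
  | [x], a, l2 => by
      intro h hw hw2
      simp only [List.getLast?_singleton, Option.some.injEq] at h
      subst h
      refine ⟨hw2, by simp [chainCost], rfl, ?_⟩
      cases l2 <;> simp
  | x :: y :: l, a, l2 => by
      intro h hw hw2
      have h' : (y :: l).getLast? = some a := by simpa using h
      obtain ⟨h1, h2, h3, h4⟩ := walk_append (y :: l) a l2 h' hw.2 hw2
      refine ⟨⟨hw.1, h1⟩, ?_, rfl, ?_⟩
      · show γ x y + chainCost γ (y :: l ++ l2) = (γ x y + chainCost γ (y :: l)) + _
        rw [h2]; ring
      · simpa using h4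

lemma walk_reverse (hE : ∀ i j, E i j → E j i) (hγs : ∀ i j, γ i j = γ j i) :
    ∀ l : List (Fin n), IsWalk E l → IsWalk E l.reverse ∧ chainCost γ l.reverse = chainCost γ l
  | [] => fun _ => ⟨trivial, rfl⟩
  | [x] => fun _ => ⟨trivial, rfl⟩
  | a :: b :: l => fun hw => by
      obtain ⟨h1, h2⟩ := walk_reverse hE hγs (b :: l) hw.2
      have hlast : (b :: l).reverse.getLast? = some b := by
        rw [List.getLast?_reverse]; rfl
      obtain ⟨w1, w2, _, _⟩ := walk_append (E := E) (γ := γ) ((b :: l).reverse) b [a] hlast h1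
        ⟨hE a b hw.1, trivial⟩
      constructor
      · have : (a :: b :: l).reverse = (b :: l).reverse ++ [a] := by simp
        rw [this]; exact w1
      · have hr : (a :: b :: l).reverse = (b :: l).reverse ++ [a] := by simp
        rw [hr, w2, h2]
        show chainCost γ (b :: l) + chainCost γ [b, a] = γ a b + chainCost γ (b :: l)
        have hba : chainCost γ [b, a] = γ b a := by simp [chainCost]
        rw [hba, hγs b a]; ring

lemma walk_bound {δ : Fin n → ℝ} (hedge : ∀ i j, E i j → |δ i - δ j| ≤ γ i j) :
    ∀ l : List (Fin n), IsWalk E l → ∀ a b, l.head? = some a → l.getLast? = some b →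
      |δ a - δ b| ≤ chainCost γ l
  | [] => by intro _ a b h; simp at h
  | [x] => by
      intro _ a b ha hb
      simp only [List.head?_cons, Option.some.injEq] at ha
      simp only [List.getLast?_singleton, Option.some.injEq] at hb
      subst ha; subst hb
      simp [chainCost]
  | x :: y :: l => by
      intro hw a b ha hb
      simp only [List.head?_cons, Option.some.injEq] at ha
      subst ha
      have h2 := walk_bound hedge (y :: l) hw.2 y b rfl (by simpa using hb)
      show |δ x - δ b| ≤ γ x y + chainCost γ (y :: l)
      calc |δ x - δ b| ≤ |δ x - δ y| + |δ y - δ b| := abs_sub_le _ _ _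
        _ ≤ γ x y + chainCost γ (y :: l) := add_le_add (hedge x y hw.1) h2

variable {dist : Fin n → Fin n → ℝ}

lemma dist_nonneg' (hγ : ∀ i j, 0 ≤ γ i j) (hSP : IsSPDist E γ dist) (i k : Fin n) :
    0 ≤ dist i k := by
  obtain ⟨l, _, _, _, hc⟩ := (hSP i k).1
  rw [hc]; exact chainCost_nonneg hγ l

lemma dist_self_nonpos (hSP : IsSPDist E γ dist) (i : Fin n) : dist i i ≤ 0 :=
  (hSP i i).2 ⟨[i], trivial, rfl, by simp, by simp [chainCost]⟩

lemma dist_le_gamma (hSP : IsSPDist E γ dist) {i k : Fin n} (h : E i k) :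
    dist i k ≤ γ i k :=
  (hSP i k).2 ⟨[i, k], ⟨h, trivial⟩, rfl, by simp, by simp [chainCost]⟩

lemma dist_triangle' (hSP : IsSPDist E γ dist) (i k j : Fin n) :
    dist i j ≤ dist i k + dist k j := by
  obtain ⟨l1, w1, h1, g1, c1⟩ := (hSP i k).1
  obtain ⟨l2, w2, h2, g2, c2⟩ := (hSP k j).1
  cases l2 with
  | nil => simp at h2
  | cons a t =>
    have ha : a = k := by simpa using h2
    subst ha
    obtain ⟨W, C, H, G⟩ := walk_append l1 a t g1 w1 w2
    refine (hSP i j).2 ⟨l1 ++ t, W, ?_, ?_, ?_⟩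
    · rw [H, h1]
    · rw [G]; exact g2
    · rw [c1, c2, C]

lemma dist_symm' (hE : ∀ i j, E i j → E j i) (hγs : ∀ i j, γ i j = γ j i)
    (hSP : IsSPDist E γ dist) (i j : Fin n) : dist i j = dist j i := by
  have key : ∀ a b : Fin n, dist a b ≤ dist b a := by
    intro a b
    obtain ⟨l, w, h, g, c⟩ := (hSP b a).1
    obtain ⟨W, C⟩ := walk_reverse hE hγs l w
    refine (hSP a b).2 ⟨l.reverse, W, ?_, ?_, ?_⟩
    · rw [List.head?_reverse]; exact g
    · rw [List.getLast?_reverse]; exact h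
    · rw [c, C]
  exact le_antisymm (key i j) (key j i)

end Stmt7Aux

open Stmt7Aux in
/-- the interval `[lo j, hi j]`, with
`lo j = max_k (δ̂_k - γ_kk - dist(k,j))` and `hi j = min_k (δ̂_k + γ_kk + dist(k,j))`,
equals the projection of the (nonempty) smooth uncertainty set onto the `j`-th coordinate. -/
theorem stmt7 {n : ℕ} (E : Fin n → Fin n → Prop) (γ : Fin n → Fin n → ℝ)
    (hEsymm : ∀ i j, E i j → E j i) (hγsymm : ∀ i j, γ i j = γ j i)
    (hγnonneg : ∀ i j, 0 ≤ γ i j)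
    (dist : Fin n → Fin n → ℝ) (hSP : IsSPDist E γ dist) (δhat : Fin n → ℝ)
    (lo hi : Fin n → ℝ)
    (hlo : ∀ j, IsGreatest {t : ℝ | ∃ k, t = δhat k - γ k k - dist k j} (lo j))
    (hhi : ∀ j, IsLeast {t : ℝ | ∃ k, t = δhat k + γ k k + dist k j} (hi j))
    (hne : (smoothSet δhat E γ).Nonempty) :
    ∀ j, {t : ℝ | ∃ δ ∈ smoothSet δhat E γ, δ j = t} = Set.Icc (lo j) (hi j) := by
  intro j
  have hd0 : ∀ i, dist i i = 0 := fun i =>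
    le_antisymm (dist_self_nonpos hSP i) (dist_nonneg' hγnonneg hSP i i)
  have hsym := dist_symm' hEsymm hγsymm hSP
  have htri := dist_triangle' hSP
  have hbd : ∀ δ ∈ smoothSet δhat E γ, ∀ i k, |δ i - δ k| ≤ dist i k := by
    intro δ hδ i k
    obtain ⟨l, w, h, g, c⟩ := (hSP i k).1
    rw [c]; exact walk_bound hδ.2 l w i k h g
  ext t
  simp only [Set.mem_setOf_eq, Set.mem_Icc]
  constructor
  · rintro ⟨δ, hδ, rfl⟩
    constructor
    · obtain ⟨k0, hk0⟩ := (hlo j).1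
      have h1 := hbd δ hδ k0 j
      have h2 := hδ.1 k0
      rw [hk0]
      linarith [(abs_le.1 h1).1, (abs_le.1 h1).2, (abs_le.1 h2).1, (abs_le.1 h2).2]
    · obtain ⟨k0, hk0⟩ := (hhi j).1
      have h1 := hbd δ hδ k0 j
      have h2 := hδ.1 k0
      rw [hk0]
      linarith [(abs_le.1 h1).1, (abs_le.1 h1).2, (abs_le.1 h2).1, (abs_le.1 h2).2]
  · rintro ⟨hlot, hhit⟩
    obtain ⟨δ0, hδ0⟩ := hne
    set δ : Fin n → ℝ := fun i => min (t + dist j i) (hi i) with hδdef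
    have hhiLB : ∀ i, δhat i - γ i i ≤ hi i := by
      intro i
      obtain ⟨k0, hk0⟩ := (hhi i).1
      have h1 := hbd δ0 hδ0 k0 i
      have h2 := hδ0.1 k0
      have h3 := hδ0.1 i
      rw [hk0]
      linarith [(abs_le.1 h1).1, (abs_le.1 h1).2, (abs_le.1 h2).1, (abs_le.1 h2).2,
        (abs_le.1 h3).1, (abs_le.1 h3).2]
    have hhiUB : ∀ i, hi i ≤ δhat i + γ i i := by
      intro i
      have h1 := (hhi i).2 ⟨i, rfl⟩
      have h2 := hd0 i
      linarith
    have hhiLip : ∀ i i', hi i ≤ hi i' + dist i' i := by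
      intro i i'
      obtain ⟨k0, hk0⟩ := (hhi i').1
      have h1 := (hhi i).2 ⟨k0, rfl⟩
      have h2 := htri k0 i' i
      rw [hk0]; linarith
    have hstep : ∀ a b, E a b → δ b ≤ δ a + γ a b := by
      intro a b hab
      have hg := dist_le_gamma hSP hab
      have h1 : t + dist j b ≤ t + dist j a + γ a b := by
        have := htri j a b; linarith
      have h2 : hi b ≤ hi a + γ a b := by
        have := hhiLip b a; linarith
      calc δ b ≤ min (t + dist j a + γ a b) (hi a + γ a b) := min_le_min h1 h2
        _ = δ a + γ a b := by
            show min ((t + dist j a) + γ a b) (hi a + γ a b) = min (t + dist j a) (hi a) + γ a b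
            rw [min_add_add_right]
    refine ⟨δ, ⟨?_, ?_⟩, ?_⟩
    · intro i
      rw [abs_le]
      constructor
      · have hmin : δhat i - γ i i ≤ δ i := by
          refine le_min ?_ (hhiLB i)
          have h1 := (hlo j).2 ⟨i, rfl⟩
          have h2 := hsym i j
          linarith
        linarith
      · have h1 : δ i ≤ hi i := min_le_right _ _
        have h2 := hhiUB i
        linarith
    · intro a b hab
      rw [abs_sub_le_iff]
      constructor
      · have h1 := hstep b a (hEsymm a b hab)
        have h2 := hγsymm b a
        linarith
      · have h1 := hstep a b hab
        linarith
    · show min (t + dist j j) (hi j) = t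
      rw [hd0 j, add_zero, min_eq_left hhit]
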